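/- arXiv:1702.00827 — 4 statements merged into one kernel-verified Lean document; each statement's English description precedes it below -/
import Mathlib

section
/- Let λ ∈ ℝ, μ ≥ 0 and let u(x) = λ e^{-μ‖x‖}/‖x‖ for x ∈ ℝ³ \ {0} be the Yukawa potential. Then for every point y ∈ ℝ³ and every smooth compactly supported function f : ℝ³ → ℂ one has ∫_{ℝ³} |u(x−y)|² |f(x)|² dx ≤ 4 λ² ∫_{ℝ³} ‖Df(x)‖² dx, where Df(x) denotes the Fréchet derivative (gradient) of f at x. In other words, |u(·−y)|² ≤ 4λ²(−Δ) holds in the sense of quadratic forms on smooth compactly supported functions. -/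
open MeasureTheory Real Set Metric

local notation "E3" => EuclideanSpace ℝ (Fin 3)

lemma integral_Ioi_vanish (f : ℝ → ℝ) (hf : Continuous f) (S : ℝ) (hS : 0 < S)
    (h0 : ∀ r, S ≤ r → f r = 0) :
    IntegrableOn f (Ioi (0:ℝ)) ∧ ∫ r in Ioi (0:ℝ), f r = ∫ r in (0:ℝ)..S, f r := by
  have hIoc : IntegrableOn f (Ioc 0 S) := hf.integrableOn_Ioc
  have hIoi : IntegrableOn f (Ioi S) := by
    have : IntegrableOn (fun _ : ℝ => (0:ℝ)) (Ioi S) := integrableOn_zero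
    exact this.congr_fun (fun x hx => (h0 x hx.le).symm) measurableSet_Ioi
  have hunion : Ioc (0:ℝ) S ∪ Ioi S = Ioi 0 := Ioc_union_Ioi_eq_Ioi hS.le
  constructor
  · rw [← hunion]; exact hIoc.union hIoi
  · rw [← hunion, setIntegral_union (Ioc_disjoint_Ioi le_rfl) measurableSet_Ioi hIoc hIoi,
      intervalIntegral.integral_of_le hS.le]
    have : ∫ r in Ioi S, f r = 0 := by
      rw [setIntegral_congr_fun measurableSet_Ioi (fun x hx => h0 x (le_of_lt hx))]
      exact integral_zero _ _
    rw [this, add_zero]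

lemma oneD_real (h h' : ℝ → ℂ) (hd : ∀ r, HasDerivAt h (h' r) r)
    (hc' : Continuous h') (R : ℝ) (hz : ∀ r, R ≤ r → h r = 0) :
    IntegrableOn (fun r => ‖h r‖^2) (Ioi (0:ℝ))
    ∧ IntegrableOn (fun r => r^2 * ‖h' r‖^2) (Ioi (0:ℝ))
    ∧ ∫ r in Ioi (0:ℝ), ‖h r‖^2 ≤ 4 * ∫ r in Ioi (0:ℝ), r^2 * ‖h' r‖^2 := by
  have hcont : Continuous h := by
    refine continuous_iff_continuousAt.2 fun r => (hd r).continuousAt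
  set S : ℝ := max R 0 + 1 with hSdef
  have hS : 0 < S := by positivity
  have hSR : R < S := lt_of_le_of_lt (le_max_left R 0) (by linarith [le_max_left R 0])
  have hzS : ∀ r, S ≤ r → h r = 0 := fun r hr => hz r (le_trans hSR.le hr)
  have hz'S : ∀ r, S ≤ r → h' r = 0 := by
    intro r hr
    have hmem : Ioi R ∈ nhds r := Ioi_mem_nhds (lt_of_lt_of_le hSR hr)
    have h0 : HasDerivAt h 0 r := by
      refine (hasDerivAt_const r (0:ℂ)).congr_of_eventuallyEq ?_
      filter_upwards [hmem] with x hx using hz x (le_of_lt hx)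
    exact ((hd r).unique h0)
  -- continuous integrands
  have hcN : Continuous fun r : ℝ => ‖h r‖^2 := (hcont.norm.pow 2)
  have hcN' : Continuous fun r : ℝ => r^2 * ‖h' r‖^2 :=
    (continuous_pow 2).mul (hc'.norm.pow 2)
  obtain ⟨hint1, heq1⟩ := integral_Ioi_vanish _ hcN S hS
    (fun r hr => by rw [hzS r hr]; simp)
  obtain ⟨hint2, heq2⟩ := integral_Ioi_vanish _ hcN' S hS
    (fun r hr => by rw [hz'S r hr]; simp)
  refine ⟨hint1, hint2, ?_⟩
  rw [heq1, heq2]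
  -- derivative of φ r = r * ((h r).re^2 + (h r).im^2)
  have hφ : ∀ r : ℝ, HasDerivAt (fun t => t * ((h t).re^2 + (h t).im^2))
      ((h r).re^2 + (h r).im^2
        + r * (2*(h r).re*(h' r).re + 2*(h r).im*(h' r).im)) r := by
    intro r
    have ha : HasDerivAt (fun t => (h t).re) ((h' r).re) r :=
      (Complex.reCLM.hasFDerivAt (x := h r)).comp_hasDerivAt r (hd r)
    have hb : HasDerivAt (fun t => (h t).im) ((h' r).im) r :=
      (Complex.imCLM.hasFDerivAt (x := h r)).comp_hasDerivAt r (hd r)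
    have := (hasDerivAt_id r).mul ((ha.pow 2).add (hb.pow 2))
    refine this.congr_deriv ?_
    simp only [id_eq, Pi.add_apply, Pi.pow_apply]
    ring
  set ψ : ℝ → ℝ := fun r => (h r).re^2 + (h r).im^2
      + r * (2*(h r).re*(h' r).re + 2*(h r).im*(h' r).im) with hψdef
  have hcψ : Continuous ψ := by
    apply Continuous.add
    · exact ((Complex.continuous_re.comp hcont).pow 2).add
        ((Complex.continuous_im.comp hcont).pow 2)
    · exact continuous_id.mul (((continuous_const.mul (Complex.continuous_re.comp hcont)).mul
        (Complex.continuous_re.comp hc')).add ((continuous_const.mul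
        (Complex.continuous_im.comp hcont)).mul (Complex.continuous_im.comp hc')))
  have hψint : ∫ r in (0:ℝ)..S, ψ r = 0 := by
    rw [intervalIntegral.integral_eq_sub_of_hasDerivAt (fun x _ => hφ x)
      (hcψ.intervalIntegrable _ _)]
    rw [hzS S le_rfl]
    simp
  -- pointwise bound
  have hpt : ∀ r ∈ Icc (0:ℝ) S, (1/2) * ‖h r‖^2 - 2 * (r^2 * ‖h' r‖^2) ≤ ψ r := by
    intro r _
    have e1 : ‖h r‖^2 = (h r).re^2 + (h r).im^2 := by
      rw [Complex.sq_norm, Complex.normSq_apply]; ring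
    have e2 : ‖h' r‖^2 = (h' r).re^2 + (h' r).im^2 := by
      rw [Complex.sq_norm, Complex.normSq_apply]; ring
    rw [e1, e2, hψdef]
    nlinarith [sq_nonneg ((h r).re + 2*r*(h' r).re), sq_nonneg ((h r).im + 2*r*(h' r).im)]
  have hmono : ∫ r in (0:ℝ)..S, ((1/2) * ‖h r‖^2 - 2 * (r^2 * ‖h' r‖^2))
      ≤ ∫ r in (0:ℝ)..S, ψ r := by
    refine intervalIntegral.integral_mono_on hS.le ?_ (hcψ.intervalIntegrable _ _) ?_
    · exact ((continuous_const.mul hcN).sub (continuous_const.mul hcN')).intervalIntegrable _ _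
    · exact hpt
  rw [hψint] at hmono
  rw [intervalIntegral.integral_sub (f := fun r => (1/2:ℝ) * ‖h r‖^2)
      (g := fun r => (2:ℝ) * (r^2 * ‖h' r‖^2)) ((continuous_const.mul hcN).intervalIntegrable _ _)
      ((continuous_const.mul hcN').intervalIntegrable _ _),
    intervalIntegral.integral_const_mul, intervalIntegral.integral_const_mul] at hmono
  linarith

lemma lintegral_spherical3 (F : E3 → ENNReal) (hF : Measurable F) :
    ∫⁻ x : E3, F x = ∫⁻ ω : sphere (0:E3) 1,
      (∫⁻ r in Ioi (0:ℝ), ENNReal.ofReal (r^2) * F (r • (ω:E3))) ∂((volume : Measure E3).toSphere) := by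
  have hdim : Module.finrank ℝ E3 = 3 := finrank_euclideanSpace_fin
  have h0 : ∫⁻ x : E3, F x = ∫⁻ x in ({(0:E3)}ᶜ : Set E3), F x := by
    rw [MeasureTheory.restrict_compl_singleton]
  rw [h0, ← lintegral_subtype_comap (measurableSet_singleton (0:E3)).compl F]
  have hmp := (volume : Measure E3).measurePreserving_homeomorphUnitSphereProd
  set Φ := homeomorphUnitSphereProd E3 with hΦ
  have hG : Measurable (fun p : sphere (0:E3) 1 × Ioi (0:ℝ) => F ((Φ.symm p : ({0}ᶜ : Set E3)) : E3)) := by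
    exact hF.comp (continuous_subtype_val.comp Φ.symm.continuous).measurable
  have hcomp := hmp.lintegral_comp hG
  have : (fun x : ({(0:E3)}ᶜ : Set E3) => F ((Φ.symm (Φ x) : ({0}ᶜ : Set E3)) : E3))
      = fun x : ({(0:E3)}ᶜ : Set E3) => F x := by
    funext x; rw [Φ.symm_apply_apply]
  rw [this] at hcomp
  rw [hcomp, lintegral_prod _ hG.aemeasurable]
  refine lintegral_congr fun ω => ?_
  have : ∀ r : Ioi (0:ℝ), ((Φ.symm (ω, r) : ({0}ᶜ : Set E3)) : E3) = (r:ℝ) • (ω:E3) := by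
    intro r; rfl
  simp only [this]
  rw [show Measure.volumeIoiPow (Module.finrank ℝ E3 - 1)
      = Measure.volumeIoiPow 2 by rw [hdim]]
  have hmeasg : Measurable (fun y : Ioi (0:ℝ) => F ((y:ℝ) • (ω:E3))) :=
    (hF.comp (by fun_prop : Measurable fun r : ℝ => r • (ω:E3))).comp measurable_subtype_coe
  have hmeasd : Measurable (fun r : Ioi (0:ℝ) => ENNReal.ofReal ((r:ℝ) ^ 2)) := by fun_prop
  rw [Measure.volumeIoiPow, lintegral_withDensity_eq_lintegral_mul _ hmeasd hmeasg,
    ← lintegral_subtype_comap measurableSet_Ioi (fun r : ℝ => ENNReal.ofReal (r ^ 2) * F (r • (ω:E3)))]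
  rfl

lemma oneD_lintegral (h h' : ℝ → ℂ) (hd : ∀ r, HasDerivAt h (h' r) r)
    (hc' : Continuous h') (R : ℝ) (hz : ∀ r, R ≤ r → h r = 0) :
    ∫⁻ r in Ioi (0:ℝ), ENNReal.ofReal (‖h r‖^2)
      ≤ 4 * ∫⁻ r in Ioi (0:ℝ), ENNReal.ofReal (r^2 * ‖h' r‖^2) := by
  obtain ⟨h1, h2, h3⟩ := oneD_real h h' hd hc' R hz
  rw [← ofReal_integral_eq_lintegral_ofReal h1
      (ae_of_all _ fun r => by positivity),
    ← ofReal_integral_eq_lintegral_ofReal h2 (ae_of_all _ fun r => by positivity)]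
  calc ENNReal.ofReal (∫ r in Ioi (0:ℝ), ‖h r‖^2)
      ≤ ENNReal.ofReal (4 * ∫ r in Ioi (0:ℝ), r^2 * ‖h' r‖^2) := ENNReal.ofReal_le_ofReal h3
    _ = 4 * ENNReal.ofReal (∫ r in Ioi (0:ℝ), r^2 * ‖h' r‖^2) := by
        rw [ENNReal.ofReal_mul (by norm_num)]; norm_num

lemma hardy_lintegral (g : E3 → ℂ) (hg : ContDiff ℝ (⊤ : ℕ∞) g) (hs : HasCompactSupport g) :
    ∫⁻ z : E3, ENNReal.ofReal (‖g z‖^2 / ‖z‖^2)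
      ≤ 4 * ∫⁻ z : E3, ENNReal.ofReal (‖fderiv ℝ g z‖^2) := by
  have hgc : Continuous g := hg.continuous
  have hDc : Continuous fun z : E3 => fderiv ℝ g z := hg.continuous_fderiv (by simp)
  have hm1 : Measurable fun z : E3 => ENNReal.ofReal (‖g z‖^2 / ‖z‖^2) := by
    apply Measurable.ennreal_ofReal
    exact ((hgc.norm.pow 2).measurable).div ((continuous_norm.pow 2).measurable)
  have hm2 : Measurable fun z : E3 => ENNReal.ofReal (‖fderiv ℝ g z‖^2) := by
    fun_prop
  -- support bound
  obtain ⟨R, hRpos, hR⟩ : ∃ R, 0 < R ∧ ∀ x : E3, R ≤ ‖x‖ → g x = 0 := by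
    obtain ⟨R0, hR0⟩ := hs.isCompact.isBounded.subset_closedBall 0
    have hmax : (0:ℝ) ≤ max R0 0 := le_max_right _ _
    have hmax' : R0 ≤ max R0 0 := le_max_left _ _
    refine ⟨max R0 0 + 1, by linarith, fun x hx => ?_⟩
    apply image_eq_zero_of_notMem_tsupport
    intro hxs
    have h1 := hR0 hxs
    simp only [mem_closedBall, dist_zero_right] at h1
    linarith
  rw [lintegral_spherical3 _ hm1, lintegral_spherical3 _ hm2]
  rw [show (4 : ENNReal) * ∫⁻ ω : sphere (0:E3) 1,
      (∫⁻ r in Ioi (0:ℝ), ENNReal.ofReal (r^2) * ENNReal.ofReal (‖fderiv ℝ g (r • (ω:E3))‖^2))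
        ∂((volume : Measure E3).toSphere)
      = ∫⁻ ω : sphere (0:E3) 1,
      4 * (∫⁻ r in Ioi (0:ℝ), ENNReal.ofReal (r^2) * ENNReal.ofReal (‖fderiv ℝ g (r • (ω:E3))‖^2))
        ∂((volume : Measure E3).toSphere) from
    (lintegral_const_mul' 4 _ (by norm_num)).symm]
  refine lintegral_mono fun ω => ?_
  -- fiber
  have hω : ‖(ω:E3)‖ = 1 := by
    have := ω.2
    rwa [mem_sphere_zero_iff_norm] at this
  set h : ℝ → ℂ := fun r => g (r • (ω:E3)) with hh
  set h' : ℝ → ℂ := fun r => fderiv ℝ g (r • (ω:E3)) (ω:E3) with hh'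
  have hd : ∀ r, HasDerivAt h (h' r) r := by
    intro r
    have hs' : HasDerivAt (fun t : ℝ => t • (ω:E3)) ((1:ℝ) • (ω:E3)) r :=
      (hasDerivAt_id r).smul_const (ω:E3)
    rw [one_smul] at hs'
    exact ((hg.differentiable (by simp) (r • (ω:E3))).hasFDerivAt).comp_hasDerivAt r hs'
  have hc' : Continuous h' := by
    exact (hDc.comp (continuous_id.smul continuous_const)).clm_apply continuous_const
  have hz : ∀ r, R ≤ r → h r = 0 := by
    intro r hr
    apply hR
    rw [norm_smul, hω, mul_one]
    exact le_trans hr (le_abs_self r)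
  calc ∫⁻ r in Ioi (0:ℝ), ENNReal.ofReal (r^2) * ENNReal.ofReal (‖g (r • (ω:E3))‖^2 / ‖r • (ω:E3)‖^2)
      = ∫⁻ r in Ioi (0:ℝ), ENNReal.ofReal (‖h r‖^2) := by
        refine setLIntegral_congr_fun measurableSet_Ioi (fun r hr => ?_)
        rw [← ENNReal.ofReal_mul (by positivity), norm_smul, hω, mul_one,
          Real.norm_eq_abs, abs_of_pos hr]
        congr 1
        have hr0 : (r:ℝ) ≠ 0 := ne_of_gt hr
        rw [mul_comm, div_mul_cancel₀ _ (pow_ne_zero 2 hr0)]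
    _ ≤ 4 * ∫⁻ r in Ioi (0:ℝ), ENNReal.ofReal (r^2 * ‖h' r‖^2) :=
        oneD_lintegral h h' hd hc' R hz
    _ ≤ 4 * ∫⁻ r in Ioi (0:ℝ), ENNReal.ofReal (r^2) * ENNReal.ofReal (‖fderiv ℝ g (r • (ω:E3))‖^2) := by
        gcongr with r
        rw [← ENNReal.ofReal_mul (by positivity)]
        apply ENNReal.ofReal_le_ofReal
        have hle : ‖h' r‖ ≤ ‖fderiv ℝ g (r • (ω:E3))‖ := by
          simpa [hω] using (fderiv ℝ g (r • (ω:E3))).le_opNorm (ω:E3)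
        have h2 : ‖h' r‖^2 ≤ ‖fderiv ℝ g (r • (ω:E3))‖^2 := by
          gcongr
        exact mul_le_mul_of_nonneg_left h2 (sq_nonneg r)

lemma hardy_real (g : E3 → ℂ) (hg : ContDiff ℝ (⊤ : ℕ∞) g) (hs : HasCompactSupport g) :
    Integrable (fun z : E3 => ‖g z‖^2 / ‖z‖^2)
    ∧ ∫ z : E3, ‖g z‖^2 / ‖z‖^2 ≤ 4 * ∫ z : E3, ‖fderiv ℝ g z‖^2 := by
  have hDc : Continuous fun z : E3 => ‖fderiv ℝ g z‖^2 :=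
    ((hg.continuous_fderiv (by simp)).norm.pow 2)
  have hDsupp : HasCompactSupport fun z : E3 => ‖fderiv ℝ g z‖^2 :=
    (hs.fderiv ℝ).comp_left (g := fun L : E3 →L[ℝ] ℂ => ‖L‖^2) (by simp)
  have hDint : Integrable (fun z : E3 => ‖fderiv ℝ g z‖^2) :=
    hDc.integrable_of_hasCompactSupport hDsupp
  have hDkey : ∫⁻ z : E3, ENNReal.ofReal (‖fderiv ℝ g z‖^2)
      = ENNReal.ofReal (∫ z : E3, ‖fderiv ℝ g z‖^2) :=
    (ofReal_integral_eq_lintegral_ofReal hDint (ae_of_all _ fun z => by positivity)).symm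
  have hlin := hardy_lintegral g hg hs
  rw [hDkey] at hlin
  have hqm : Measurable fun z : E3 => ‖g z‖^2 / ‖z‖^2 :=
    ((hg.continuous.norm.pow 2).measurable).div ((continuous_norm.pow 2).measurable)
  have hqnn : (0 : E3 → ℝ) ≤ᵐ[volume] fun z : E3 => ‖g z‖^2 / ‖z‖^2 :=
    ae_of_all _ fun z => by positivity
  have hlt : (4 : ENNReal) * ENNReal.ofReal (∫ z : E3, ‖fderiv ℝ g z‖^2) < ⊤ :=
    ENNReal.mul_lt_top (by norm_num) ENNReal.ofReal_lt_top
  have hqint : Integrable (fun z : E3 => ‖g z‖^2 / ‖z‖^2) := by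
    refine ⟨hqm.aestronglyMeasurable, ?_⟩
    rw [hasFiniteIntegral_iff_ofReal hqnn]
    exact lt_of_le_of_lt hlin hlt
  refine ⟨hqint, ?_⟩
  have heq : ∫ z : E3, ‖g z‖^2 / ‖z‖^2
      = (∫⁻ z : E3, ENNReal.ofReal (‖g z‖^2 / ‖z‖^2)).toReal :=
    integral_eq_lintegral_of_nonneg_ae hqnn hqm.aestronglyMeasurable
  rw [heq]
  calc (∫⁻ z : E3, ENNReal.ofReal (‖g z‖^2 / ‖z‖^2)).toReal
      ≤ ((4 : ENNReal) * ENNReal.ofReal (∫ z : E3, ‖fderiv ℝ g z‖^2)).toReal :=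
        ENNReal.toReal_mono hlt.ne hlin
    _ = 4 * ∫ z : E3, ‖fderiv ℝ g z‖^2 := by
        rw [ENNReal.toReal_mul, ENNReal.toReal_ofReal (integral_nonneg fun z => by positivity)]
        norm_num

/-- Hardy-type bound for the Yukawa potential: `|u(·−y)|² ≤ 4λ²(−Δ)` in the sense of
quadratic forms on smooth compactly supported functions. -/
theorem yukawa_square_form_bound
    (lam mu : ℝ) (hmu : 0 ≤ mu)
    (u : EuclideanSpace ℝ (Fin 3) → ℝ)
    (hu : ∀ x : EuclideanSpace ℝ (Fin 3), x ≠ 0 →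
      u x = lam * Real.exp (-mu * ‖x‖) / ‖x‖)
    (y : EuclideanSpace ℝ (Fin 3))
    (f : EuclideanSpace ℝ (Fin 3) → ℂ)
    (hf : ContDiff ℝ (⊤ : ℕ∞) f) (hsupp : HasCompactSupport f) :
    ∫ x : EuclideanSpace ℝ (Fin 3), |u (x - y)| ^ 2 * ‖f x‖ ^ 2
      ≤ 4 * lam ^ 2 * ∫ x : EuclideanSpace ℝ (Fin 3), ‖fderiv ℝ f x‖ ^ 2 := by
  set g : E3 → ℂ := fun z => f (y + z) with hgdef
  have hg : ContDiff ℝ (⊤ : ℕ∞) g := hf.comp (contDiff_const.add contDiff_id)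
  have hgs : HasCompactSupport g := by
    have : g = f ∘ (Homeomorph.addLeft y) := rfl
    rw [this]
    exact hsupp.comp_homeomorph _
  have hDg : ∀ z : E3, fderiv ℝ g z = fderiv ℝ f (y + z) := by
    intro z
    have h1 : HasFDerivAt (fun z : E3 => y + z) (ContinuousLinearMap.id ℝ E3) z :=
      (hasFDerivAt_id z).const_add y
    have h2 : HasFDerivAt g ((fderiv ℝ f (y + z)).comp (ContinuousLinearMap.id ℝ E3)) z :=
      ((hf.differentiable (by simp) (y + z)).hasFDerivAt).comp z h1
    rw [ContinuousLinearMap.comp_id] at h2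
    exact h2.fderiv
  obtain ⟨hqint, hhardy⟩ := hardy_real g hg hgs
  -- translate LHS
  have htrans : ∫ x : E3, |u (x - y)| ^ 2 * ‖f x‖ ^ 2
      = ∫ z : E3, |u z| ^ 2 * ‖g z‖ ^ 2 := by
    rw [← integral_sub_right_eq_self (μ := volume) (fun z : E3 => |u z| ^ 2 * ‖g z‖ ^ 2) y]
    refine integral_congr_ae (ae_of_all _ fun x => ?_)
    simp only [hgdef, add_sub_cancel]
  rw [htrans]
  set Ψ' : E3 → ℝ := fun z => (lam * Real.exp (-mu * ‖z‖) / ‖z‖) ^ 2 * ‖g z‖ ^ 2 with hΨ'def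
  have h0 : ∀ᵐ z : E3 ∂(volume : Measure E3), z ≠ (0:E3) := by
    simp [ae_iff]
  have hae : (fun z : E3 => |u z| ^ 2 * ‖g z‖ ^ 2) =ᵐ[volume] Ψ' := by
    filter_upwards [h0] with z hz
    rw [hΨ'def]
    simp only
    rw [sq_abs, hu z hz]
  have hΨ'le : ∀ z : E3, Ψ' z ≤ lam ^ 2 * (‖g z‖ ^ 2 / ‖z‖ ^ 2) := by
    intro z
    rcases eq_or_ne z 0 with rfl | hz
    · simp [hΨ'def]
    · have hr : 0 < ‖z‖ := norm_pos_iff.2 hz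
      have he : Real.exp (-mu * ‖z‖) ≤ 1 := by
        rw [Real.exp_le_one_iff]
        nlinarith
      have hepos : 0 < Real.exp (-mu * ‖z‖) := Real.exp_pos _
      have key : Ψ' z = lam ^ 2 * (‖g z‖ ^ 2 / ‖z‖ ^ 2) * Real.exp (-mu * ‖z‖) ^ 2 := by
        rw [hΨ'def]
        field_simp
      rw [key]
      have h1 : Real.exp (-mu * ‖z‖) ^ 2 ≤ 1 := by nlinarith
      have h2 : 0 ≤ lam ^ 2 * (‖g z‖ ^ 2 / ‖z‖ ^ 2) := by positivity
      nlinarith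
  have hΨ'meas : AEStronglyMeasurable Ψ' (volume : Measure E3) := by
    apply Measurable.aestronglyMeasurable
    apply Measurable.mul ?_ ((hg.continuous.norm.pow 2).measurable)
    apply Measurable.pow_const
    exact ((measurable_const.mul ((Real.continuous_exp.measurable).comp
      ((continuous_const.mul continuous_norm).measurable)))).div continuous_norm.measurable
  have hΨ'int : Integrable Ψ' := by
    refine (hqint.const_mul (lam ^ 2)).mono hΨ'meas (ae_of_all _ fun z => ?_)
    rw [Real.norm_eq_abs, Real.norm_eq_abs, abs_of_nonneg (by positivity : (0:ℝ) ≤ Ψ' z)]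
    exact le_trans (hΨ'le z) (le_abs_self _)
  calc ∫ z : E3, |u z| ^ 2 * ‖g z‖ ^ 2
      = ∫ z : E3, Ψ' z := integral_congr_ae hae
    _ ≤ ∫ z : E3, lam ^ 2 * (‖g z‖ ^ 2 / ‖z‖ ^ 2) :=
        integral_mono_ae hΨ'int (hqint.const_mul _) (ae_of_all _ hΨ'le)
    _ = lam ^ 2 * ∫ z : E3, ‖g z‖ ^ 2 / ‖z‖ ^ 2 := integral_const_mul _ _
    _ ≤ lam ^ 2 * (4 * ∫ z : E3, ‖fderiv ℝ g z‖ ^ 2) :=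
        mul_le_mul_of_nonneg_left hhardy (sq_nonneg _)
    _ = 4 * lam ^ 2 * ∫ z : E3, ‖fderiv ℝ f (y + z)‖ ^ 2 := by
        rw [← mul_assoc, mul_comm (lam ^ 2) 4]
        congr 1
        exact integral_congr_ae (ae_of_all _ fun z => by simp only [hDg z])
    _ = 4 * lam ^ 2 * ∫ x : E3, ‖fderiv ℝ f x‖ ^ 2 := by
        congr 1
        exact integral_add_left_eq_self (μ := (volume : Measure E3)) (fun x : E3 => ‖fderiv ℝ f x‖ ^ 2) y
end

section
/- Let λ ∈ ℝ, μ ≥ 0 and let u(x) = λ e^{-μ‖x‖}/‖x‖ for x ∈ ℝ³ \ {0} be the Yukawa potential. Then for every smooth compactly supported function φ : ℝ³ → ℂ and every x ∈ ℝ³ one has |∫_{ℝ³} u(x−y) |φ(y)|² dy| ≤ 2 |λ| ‖φ‖₂ ‖∇φ‖₂, i.e. the convolution u ∗ |φ|² is bounded in L^∞ by 2|λ| ‖φ‖₂ ‖∇φ‖₂. -/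
open MeasureTheory Real Metric Set

local notation "E3" => EuclideanSpace ℝ (Fin 3)

lemma integrable_indicator_inv_norm {R : ℝ} (hR : 0 < R) :
    Integrable ((Metric.ball (0 : E3) R).indicator (fun z => ‖z‖⁻¹)) := by
  have hmeas : Measurable ((Metric.ball (0 : E3) R).indicator fun z => ‖z‖⁻¹) :=
    (measurable_norm.inv).indicator measurableSet_ball
  have hnn : ∀ z : E3, 0 ≤ (Metric.ball (0 : E3) R).indicator (fun z => ‖z‖⁻¹) z := by
    intro z
    apply Set.indicator_nonneg
    intro z _; positivity
  refine ⟨hmeas.aestronglyMeasurable, ?_⟩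
  rw [hasFiniteIntegral_iff_ofReal (Filter.Eventually.of_forall hnn)]
  rw [lintegral_eq_lintegral_meas_le volume (Filter.Eventually.of_forall hnn) hmeas.aemeasurable]
  set B := volume (Metric.ball (0 : E3) 1) with hB
  have hBlt : B < ⊤ := measure_ball_lt_top
  -- measure bound
  have key : ∀ t : ℝ, 0 < t →
      volume {a : E3 | t ≤ (Metric.ball (0 : E3) R).indicator (fun z => ‖z‖⁻¹) a}
        ≤ ENNReal.ofReal (min R t⁻¹ ^ 3) * B := by
    intro t ht
    have hsub : {a : E3 | t ≤ (Metric.ball (0 : E3) R).indicator (fun z => ‖z‖⁻¹) a}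
        ⊆ Metric.closedBall 0 (min R t⁻¹) := by
      intro a ha
      simp only [Set.mem_setOf_eq] at ha
      by_cases hmem : a ∈ Metric.ball (0 : E3) R
      · rw [Set.indicator_of_mem hmem] at ha
        have ha0 : a ≠ 0 := by
          rintro rfl
          simp at ha; linarith
        have hna : 0 < ‖a‖ := norm_pos_iff.2 ha0
        have h1 : ‖a‖ ≤ t⁻¹ := by
          rw [← inv_inv ‖a‖]
          exact inv_anti₀ ht ha
        have h2 : ‖a‖ ≤ R := le_of_lt (by simpa using hmem)
        simp only [Metric.mem_closedBall, dist_zero_right]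
        exact le_min h2 h1
      · rw [Set.indicator_of_notMem hmem] at ha
        linarith
    calc volume {a : E3 | t ≤ (Metric.ball (0 : E3) R).indicator (fun z => ‖z‖⁻¹) a}
        ≤ volume (Metric.closedBall (0 : E3) (min R t⁻¹)) := measure_mono hsub
      _ = ENNReal.ofReal (min R t⁻¹ ^ 3) * B := by
          rw [Measure.addHaar_closedBall _ _ (le_min hR.le (by positivity))]
          congr 2
          · rw [finrank_euclideanSpace_fin]
  calc ∫⁻ t in Ioi (0:ℝ), volume {a : E3 | t ≤ (Metric.ball (0 : E3) R).indicator (fun z => ‖z‖⁻¹) a}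
      ≤ ∫⁻ t in Ioc (0:ℝ) R⁻¹ ∪ Ioi R⁻¹, volume {a : E3 | t ≤ (Metric.ball (0 : E3) R).indicator (fun z => ‖z‖⁻¹) a} :=
        lintegral_mono_set Ioi_subset_Ioc_union_Ioi
    _ ≤ (∫⁻ t in Ioc (0:ℝ) R⁻¹, volume {a : E3 | t ≤ (Metric.ball (0 : E3) R).indicator (fun z => ‖z‖⁻¹) a})
        + ∫⁻ t in Ioi R⁻¹, volume {a : E3 | t ≤ (Metric.ball (0 : E3) R).indicator (fun z => ‖z‖⁻¹) a} :=
        lintegral_union_le _ _ _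
    _ < ⊤ := by
        refine ENNReal.add_lt_top.2 ⟨?_, ?_⟩
        · calc (∫⁻ t in Ioc (0:ℝ) R⁻¹, volume {a : E3 | t ≤ (Metric.ball (0 : E3) R).indicator (fun z => ‖z‖⁻¹) a})
              ≤ ∫⁻ _t in Ioc (0:ℝ) R⁻¹, ENNReal.ofReal (R ^ 3) * B := by
                refine setLIntegral_mono' measurableSet_Ioc (fun t ht => ?_)
                refine le_trans (key t ht.1) ?_
                have h1 : R ⊓ t⁻¹ ≤ R := min_le_left _ _
                gcongr
                exact le_min hR.le (inv_nonneg.2 ht.1.le)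
            _ = ENNReal.ofReal (R ^ 3) * B * volume (Ioc (0:ℝ) R⁻¹) := by
                rw [setLIntegral_const]
            _ < ⊤ := by
                refine ENNReal.mul_lt_top (ENNReal.mul_lt_top ?_ hBlt) ?_
                · exact ENNReal.ofReal_lt_top
                · rw [Real.volume_Ioc]; exact ENNReal.ofReal_lt_top
        · calc (∫⁻ t in Ioi R⁻¹, volume {a : E3 | t ≤ (Metric.ball (0 : E3) R).indicator (fun z => ‖z‖⁻¹) a})
              ≤ ∫⁻ t in Ioi R⁻¹, ENNReal.ofReal ((t⁻¹) ^ 3) * B := by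
                refine setLIntegral_mono' measurableSet_Ioi (fun t ht => ?_)
                have ht0 : 0 < t := lt_trans (by positivity) ht
                refine le_trans (key t ht0) ?_
                have h1 : R ⊓ t⁻¹ ≤ t⁻¹ := min_le_right _ _
                gcongr
            _ = (∫⁻ t in Ioi R⁻¹, ENNReal.ofReal ((t⁻¹) ^ 3)) * B :=
                lintegral_mul_const' _ _ hBlt.ne
            _ < ⊤ := by
                refine ENNReal.mul_lt_top ?_ hBlt
                have hint : IntegrableOn (fun t : ℝ => (t⁻¹) ^ 3) (Ioi R⁻¹) := by
                  refine (integrableOn_Ioi_rpow_of_lt (by norm_num : (-3:ℝ) < -1)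
                    (by positivity : (0:ℝ) < R⁻¹)).congr_fun (fun t ht => ?_) measurableSet_Ioi
                  have ht0 : 0 < t := lt_trans (by positivity) ht
                  beta_reduce
                  rw [show ((-3:ℝ)) = -(3:ℕ) by norm_num, Real.rpow_neg ht0.le,
                    Real.rpow_natCast, ← inv_pow]
                exact hint.setLIntegral_lt_top

lemma integrable_div_norm {ψ : EuclideanSpace ℝ (Fin 3) → ℝ}
    (hc : Continuous ψ) (hs : HasCompactSupport ψ) :
    Integrable (fun z : E3 => ψ z / ‖z‖) := by
  obtain ⟨M, hM⟩ := hs.exists_bound_of_continuous hc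
  obtain ⟨R, hR, hRs⟩ : ∃ R : ℝ, 0 < R ∧ tsupport ψ ⊆ Metric.ball 0 R := by
    obtain ⟨R, hRs⟩ := hs.isBounded.subset_ball 0
    exact ⟨max R 1, by positivity, hRs.trans (Metric.ball_subset_ball (le_max_left _ _))⟩
  have hMnn : 0 ≤ M := le_trans (norm_nonneg _) (hM 0)
  refine Integrable.mono' ((integrable_indicator_inv_norm hR).const_mul M)
    ((hc.measurable.div measurable_norm).aestronglyMeasurable)
    (Filter.Eventually.of_forall fun z => ?_)
  by_cases hz : z ∈ Metric.ball (0 : E3) R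
  · rw [Set.indicator_of_mem hz]
    rw [Real.norm_eq_abs, abs_div, abs_norm, div_eq_mul_inv]
    gcongr
    exact (Real.norm_eq_abs (ψ z)) ▸ hM z
  · have : ψ z = 0 := image_eq_zero_of_notMem_tsupport (fun h => hz (hRs h))
    rw [Set.indicator_of_notMem hz, this]
    simp

noncomputable def Fd (φ : EuclideanSpace ℝ (Fin 3) → ℂ) (x : EuclideanSpace ℝ (Fin 3))
    (t : ℝ) (z : EuclideanSpace ℝ (Fin 3)) : ℝ :=
  (2 * ((φ (x - t • z)).re * ((fderiv ℝ φ (x - t • z)) (-z)).re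
      + (φ (x - t • z)).im * ((fderiv ℝ φ (x - t • z)) (-z)).im)) / ‖z‖

lemma norm_sq_complex (w : ℂ) : ‖w‖ ^ 2 = w.re * w.re + w.im * w.im := by
  rw [Complex.sq_norm, Complex.normSq_apply]

lemma Fd_abs_le (φ : EuclideanSpace ℝ (Fin 3) → ℂ) (x : EuclideanSpace ℝ (Fin 3))
    (t : ℝ) (z : EuclideanSpace ℝ (Fin 3)) :
    ‖Fd φ x t z‖ ≤ 4 * (‖φ (x - t • z)‖ * ‖fderiv ℝ φ (x - t • z)‖) := by
  by_cases hz : z = 0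
  · subst hz
    simp only [Fd, norm_zero, div_zero, norm_zero]
    positivity
  · have hz' : 0 < ‖z‖ := norm_pos_iff.2 hz
    set w := φ (x - t • z) with hw
    set d := (fderiv ℝ φ (x - t • z)) (-z) with hd
    have hdle : ‖d‖ ≤ ‖fderiv ℝ φ (x - t • z)‖ * ‖z‖ := by
      refine le_trans (ContinuousLinearMap.le_opNorm _ _) ?_
      rw [norm_neg]
    have hre : |w.re| ≤ ‖w‖ := by
      exact Complex.abs_re_le_norm w
    have him : |w.im| ≤ ‖w‖ := by
      exact Complex.abs_im_le_norm w
    have hre' : |d.re| ≤ ‖d‖ := by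
      exact Complex.abs_re_le_norm d
    have him' : |d.im| ≤ ‖d‖ := by
      exact Complex.abs_im_le_norm d
    have hnum : |2 * (w.re * d.re + w.im * d.im)| ≤ 4 * (‖w‖ * ‖d‖) := by
      have h1 : |w.re * d.re| ≤ ‖w‖ * ‖d‖ := by
        rw [abs_mul]; exact mul_le_mul hre hre' (abs_nonneg _) (norm_nonneg _)
      have h2 : |w.im * d.im| ≤ ‖w‖ * ‖d‖ := by
        rw [abs_mul]; exact mul_le_mul him him' (abs_nonneg _) (norm_nonneg _)
      calc |2 * (w.re * d.re + w.im * d.im)|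
          = 2 * |w.re * d.re + w.im * d.im| := by rw [abs_mul]; norm_num
        _ ≤ 2 * (|w.re * d.re| + |w.im * d.im|) := by
            gcongr; exact abs_add_le _ _
        _ ≤ 4 * (‖w‖ * ‖d‖) := by nlinarith
    have : ‖Fd φ x t z‖ = |2 * (w.re * d.re + w.im * d.im)| / ‖z‖ := by
      rw [Fd, Real.norm_eq_abs, abs_div, abs_norm]
    rw [this, div_le_iff₀ hz']
    calc |2 * (w.re * d.re + w.im * d.im)| ≤ 4 * (‖w‖ * ‖d‖) := hnum
      _ ≤ 4 * (‖w‖ * (‖fderiv ℝ φ (x - t • z)‖ * ‖z‖)) := by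
          gcongr
      _ = 4 * (‖w‖ * ‖fderiv ℝ φ (x - t • z)‖) * ‖z‖ := by ring

lemma hasDerivAt_Fd (φ : EuclideanSpace ℝ (Fin 3) → ℂ) (hφ : ContDiff ℝ (⊤ : ℕ∞) φ)
    (x : EuclideanSpace ℝ (Fin 3)) (t : ℝ) (z : EuclideanSpace ℝ (Fin 3)) :
    HasDerivAt (fun s : ℝ => ‖φ (x - s • z)‖ ^ 2 / ‖z‖) (Fd φ x t z) t := by
  have hc : HasDerivAt (fun s : ℝ => x - s • z) (-z) t := by
    simpa using ((hasDerivAt_id t).smul_const z).const_sub x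
  have hψ : HasDerivAt (fun s : ℝ => φ (x - s • z)) ((fderiv ℝ φ (x - t • z)) (-z)) t :=
    ((hφ.differentiable (by simp) (x - t • z)).hasFDerivAt).comp_hasDerivAt t hc
  have hre : HasDerivAt (fun s : ℝ => (φ (x - s • z)).re)
      ((fderiv ℝ φ (x - t • z) (-z)).re) t :=
    Complex.reCLM.hasFDerivAt.comp_hasDerivAt t hψ
  have him : HasDerivAt (fun s : ℝ => (φ (x - s • z)).im)
      ((fderiv ℝ φ (x - t • z) (-z)).im) t :=
    Complex.imCLM.hasFDerivAt.comp_hasDerivAt t hψ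
  have hsq := ((hre.mul hre).add (him.mul him)).div_const ‖z‖
  have heq : (fun s : ℝ => ((φ (x - s • z)).re * (φ (x - s • z)).re
      + (φ (x - s • z)).im * (φ (x - s • z)).im) / ‖z‖)
      = fun s : ℝ => ‖φ (x - s • z)‖ ^ 2 / ‖z‖ := by
    funext s; rw [norm_sq_complex]
  simp only [Pi.add_apply, Pi.mul_apply] at hsq
  rw [heq] at hsq
  refine hsq.congr_deriv ?_
  rw [Fd]
  ring

lemma core_bound (φ : EuclideanSpace ℝ (Fin 3) → ℂ) (hφ : ContDiff ℝ (⊤ : ℕ∞) φ)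
    (hsupp : HasCompactSupport φ) (x : EuclideanSpace ℝ (Fin 3)) :
    (∫ z : EuclideanSpace ℝ (Fin 3), ‖φ (x - z)‖ ^ 2 / ‖z‖)
      ≤ 2 * ∫ y : EuclideanSpace ℝ (Fin 3), ‖φ y‖ * ‖fderiv ℝ φ y‖ := by
  have hφc : Continuous φ := hφ.continuous
  have hφ'c : Continuous (fderiv ℝ φ) := hφ.continuous_fderiv (by simp)
  have hφ's : HasCompactSupport (fderiv ℝ φ) := hsupp.fderiv (𝕜 := ℝ)
  obtain ⟨M, hM⟩ := hsupp.exists_bound_of_continuous hφc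
  obtain ⟨M', hM'⟩ := hφ's.exists_bound_of_continuous hφ'c
  have hMnn : 0 ≤ M := le_trans (norm_nonneg _) (hM 0)
  have hM'nn : 0 ≤ M' := le_trans (norm_nonneg _) (hM' 0)
  obtain ⟨R, hRs⟩ := hsupp.isBounded.subset_closedBall 0
  set K := 2 * (‖x‖ + |R|) with hK
  -- the function ψ y = ‖φ y‖^2 and its x-reflection
  have hψc : Continuous (fun z : E3 => ‖φ (x - z)‖ ^ 2) :=
    ((hφc.comp (continuous_const.sub continuous_id)).norm.pow 2)
  have hψs : HasCompactSupport (fun z : E3 => ‖φ (x - z)‖ ^ 2) := by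
    have h1 : HasCompactSupport (fun y : E3 => ‖φ y‖ ^ 2) :=
      hsupp.comp_left (g := fun c : ℂ => ‖c‖ ^ 2) (by simp)
    exact h1.comp_homeomorph (Homeomorph.subLeft x)
  set C := ∫ z : E3, ‖φ (x - z)‖ ^ 2 / ‖z‖ with hC
  have hCnn : 0 ≤ C := integral_nonneg (fun z => by positivity)
  -- derivative of the integral via dominated convergence
  have main := hasDerivAt_integral_of_dominated_loc_of_deriv_le
    (F := fun (t : ℝ) (z : E3) => ‖φ (x - t • z)‖ ^ 2 / ‖z‖)
    (F' := fun (t : ℝ) (z : E3) => Fd φ x t z) (x₀ := (1:ℝ)) (s := Metric.ball (1:ℝ) (1/2))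
    (bound := fun z : E3 => (Metric.closedBall (0:E3) K).indicator
      (fun _ => 4 * (M * M')) z)
    (μ := volume) (Metric.ball_mem_nhds _ one_half_pos)
    (Filter.Eventually.of_forall (fun t => by
      exact (((hφc.comp (continuous_const.sub
        (continuous_id.const_smul t))).norm.pow 2).measurable.div
        measurable_norm).aestronglyMeasurable))
    (by
      simp only [one_smul]
      exact integrable_div_norm hψc hψs)
    (by
      have hA : Continuous (fun z : E3 =>
          2 * ((φ (x - (1:ℝ) • z)).re * ((fderiv ℝ φ (x - (1:ℝ) • z)) (-z)).re
          + (φ (x - (1:ℝ) • z)).im * ((fderiv ℝ φ (x - (1:ℝ) • z)) (-z)).im)) := by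
        fun_prop
      exact ((hA.measurable.div measurable_norm).aestronglyMeasurable))
    (Filter.Eventually.of_forall (fun z => by
      intro t ht
      show ‖Fd φ x t z‖ ≤ (Metric.closedBall (0:E3) K).indicator (fun _ => 4 * (M * M')) z
      have ht' : 1/2 < t := by
        rw [Metric.mem_ball, Real.dist_eq, abs_sub_lt_iff] at ht
        linarith [ht.2]
      by_cases hsup : x - t • z ∈ Function.support φ
      · have hzK : z ∈ Metric.closedBall (0:E3) K := by
          have h1 : ‖x - t • z‖ ≤ |R| :=
            le_trans (by simpa using hRs (subset_tsupport φ hsup))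
              (le_abs_self R)
          have h2 : ‖t • z‖ ≤ ‖x‖ + |R| := by
            have : t • z = x - (x - t • z) := by abel
            rw [this]
            exact le_trans (norm_sub_le _ _) (by linarith)
          have h3 : |t| * ‖z‖ ≤ ‖x‖ + |R| := by rwa [norm_smul] at h2
          have h4 : (1/2) * ‖z‖ ≤ ‖x‖ + |R| := by
            refine le_trans ?_ h3
            gcongr
            rw [le_abs]; left; linarith
          simp only [Metric.mem_closedBall, dist_zero_right]
          rw [hK]; linarith
        rw [Set.indicator_of_mem hzK]
        refine le_trans (Fd_abs_le φ x t z) ?_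
        gcongr
        · exact hM _
        · exact hM' _
      · have hz0 : φ (x - t • z) = 0 := Function.notMem_support.1 hsup
        have : Fd φ x t z = 0 := by
          rw [Fd, hz0]
          simp
        rw [this, norm_zero]
        exact Set.indicator_nonneg (fun _ _ => by positivity) _))
    (by
      refine (integrable_indicator_iff measurableSet_closedBall).2 ?_
      exact integrableOn_const measure_closedBall_lt_top.ne)
    (Filter.Eventually.of_forall (fun z => fun t _ => hasDerivAt_Fd φ hφ x t z))
  have hderI : HasDerivAt (fun t : ℝ => ∫ z : E3, ‖φ (x - t • z)‖ ^ 2 / ‖z‖)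
      (∫ z : E3, Fd φ x 1 z) 1 := main.2
  -- scaling identity
  have hscale : ∀ t : ℝ, 0 < t →
      (∫ z : E3, ‖φ (x - t • z)‖ ^ 2 / ‖z‖) = (t ^ 2)⁻¹ * C := by
    intro t ht
    have h1 : ∀ z : E3, ‖φ (x - t • z)‖ ^ 2 / ‖z‖
        = t * ((fun w : E3 => ‖φ (x - w)‖ ^ 2 / ‖w‖) (t • z)) := by
      intro z
      by_cases hz : z = 0
      · subst hz; simp
      · have hz' : (0:ℝ) < ‖z‖ := norm_pos_iff.2 hz
        simp only [norm_smul, Real.norm_eq_abs, abs_of_pos ht]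
        field_simp
    calc ∫ z : E3, ‖φ (x - t • z)‖ ^ 2 / ‖z‖
        = ∫ z : E3, t * ((fun w : E3 => ‖φ (x - w)‖ ^ 2 / ‖w‖) (t • z)) := by
          simp_rw [h1]
      _ = t * ∫ z : E3, (fun w : E3 => ‖φ (x - w)‖ ^ 2 / ‖w‖) (t • z) :=
          integral_const_mul _ _
      _ = t * (|(t ^ Module.finrank ℝ E3)⁻¹| • ∫ w : E3, ‖φ (x - w)‖ ^ 2 / ‖w‖) := by
          congr 1
          exact Measure.integral_comp_smul volume
            (fun w : E3 => ‖φ (x - w)‖ ^ 2 / ‖w‖) t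
      _ = (t ^ 2)⁻¹ * C := by
          rw [finrank_euclideanSpace_fin, smul_eq_mul,
            abs_of_pos (by positivity), ← hC]
          field_simp
  have hg : HasDerivAt (fun t : ℝ => (t ^ 2)⁻¹ * C) (-2 * C) 1 := by
    have h0 := (hasDerivAt_zpow (-2) (1:ℝ) (Or.inl one_ne_zero)).mul_const C
    have he : (fun t : ℝ => t ^ (-2:ℤ) * C) = fun t : ℝ => (t ^ 2)⁻¹ * C := by
      funext t
      rw [zpow_neg]
      norm_cast
    rw [he] at h0
    refine h0.congr_deriv ?_
    norm_num
  have hIg : HasDerivAt (fun t : ℝ => ∫ z : E3, ‖φ (x - t • z)‖ ^ 2 / ‖z‖)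
      (-2 * C) 1 := by
    refine hg.congr_of_eventuallyEq ?_
    filter_upwards [eventually_gt_nhds (zero_lt_one)] with t ht
    exact hscale t ht
  have hval : (∫ z : E3, Fd φ x 1 z) = -2 * C := hderI.unique hIg
  -- final estimate
  have hgs : HasCompactSupport (fun y : E3 => ‖φ y‖ * ‖fderiv ℝ φ y‖) := by
    exact (hsupp.comp_left (g := fun c : ℂ => ‖c‖) norm_zero).mul_right
  have hgint : Integrable (fun y : E3 => ‖φ y‖ * ‖fderiv ℝ φ y‖) :=
    (hφc.norm.mul hφ'c.norm).integrable_of_hasCompactSupport hgs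
  have hgint' : Integrable (fun z : E3 => ‖φ (x - z)‖ * ‖fderiv ℝ φ (x - z)‖) :=
    hgint.comp_sub_left x
  have habs : ‖∫ z : E3, Fd φ x 1 z‖
      ≤ ∫ z : E3, 4 * (‖φ (x - z)‖ * ‖fderiv ℝ φ (x - z)‖) :=
    norm_integral_le_of_norm_le (hgint'.const_mul 4)
      (Filter.Eventually.of_forall (fun z => by
        simpa [one_smul] using Fd_abs_le φ x 1 z))
  have h2C : 2 * C ≤ 4 * ∫ y : E3, ‖φ y‖ * ‖fderiv ℝ φ y‖ := by
    have h1 : ‖∫ z : E3, Fd φ x 1 z‖ = 2 * C := by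
      rw [hval, Real.norm_eq_abs, abs_mul, abs_of_nonneg hCnn]
      norm_num
    have h2 : (∫ z : E3, 4 * (‖φ (x - z)‖ * ‖fderiv ℝ φ (x - z)‖))
        = 4 * ∫ y : E3, ‖φ y‖ * ‖fderiv ℝ φ y‖ := by
      rw [integral_const_mul]
      congr 1
      exact integral_sub_left_eq_self (fun y : E3 => ‖φ y‖ * ‖fderiv ℝ φ y‖) volume x
    rw [← h1, ← h2]
    exact habs
  linarith

lemma cauchy_schwarz_step (φ : EuclideanSpace ℝ (Fin 3) → ℂ) (hφ : ContDiff ℝ (⊤ : ℕ∞) φ)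
    (hsupp : HasCompactSupport φ) :
    (∫ y : EuclideanSpace ℝ (Fin 3), ‖φ y‖ * ‖fderiv ℝ φ y‖)
      ≤ Real.sqrt (∫ y : EuclideanSpace ℝ (Fin 3), ‖φ y‖ ^ 2)
        * Real.sqrt (∫ y : EuclideanSpace ℝ (Fin 3), ‖fderiv ℝ φ y‖ ^ 2) := by
  have hpq : Real.HolderConjugate 2 2 := Real.HolderConjugate.two_two
  have hf : MemLp (fun y : E3 => ‖φ y‖) (ENNReal.ofReal 2) volume :=
    hφ.continuous.norm.memLp_of_hasCompactSupport
      (hsupp.comp_left (g := fun c : ℂ => ‖c‖) norm_zero)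
  have hg : MemLp (fun y : E3 => ‖fderiv ℝ φ y‖) (ENNReal.ofReal 2) volume :=
    (hφ.continuous_fderiv (by simp)).norm.memLp_of_hasCompactSupport
      ((hsupp.fderiv (𝕜 := ℝ)).comp_left norm_zero)
  have h := integral_mul_norm_le_Lp_mul_Lq (μ := volume) hpq hf hg
  have hr2 : ∀ r : ℝ, r ^ (2:ℝ) = r ^ 2 := fun r => by
    rw [show (2:ℝ) = ((2:ℕ):ℝ) by norm_num, Real.rpow_natCast]
  simp only [norm_norm, hr2] at h
  rw [Real.sqrt_eq_rpow, Real.sqrt_eq_rpow]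
  exact h

/-- The convolution of a Yukawa potential with `|φ|²` is bounded in `L^∞` by
`2|λ| ‖φ‖₂ ‖∇φ‖₂` for smooth compactly supported `φ`. -/
theorem yukawa_conv_sq_Linfty_bound
    (lam mu : ℝ) (hmu : 0 ≤ mu)
    (u : EuclideanSpace ℝ (Fin 3) → ℝ)
    (hu : ∀ x : EuclideanSpace ℝ (Fin 3), x ≠ 0 →
      u x = lam * Real.exp (-mu * ‖x‖) / ‖x‖)
    (φ : EuclideanSpace ℝ (Fin 3) → ℂ)
    (hφ : ContDiff ℝ (⊤ : ℕ∞) φ) (hsupp : HasCompactSupport φ)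
    (x : EuclideanSpace ℝ (Fin 3)) :
    |∫ y : EuclideanSpace ℝ (Fin 3), u (x - y) * ‖φ y‖ ^ 2|
      ≤ 2 * |lam| * Real.sqrt (∫ y : EuclideanSpace ℝ (Fin 3), ‖φ y‖ ^ 2)
          * Real.sqrt (∫ y : EuclideanSpace ℝ (Fin 3), ‖fderiv ℝ φ y‖ ^ 2) := by
  have hφc : Continuous φ := hφ.continuous
  have hψc : Continuous (fun z : E3 => ‖φ (x - z)‖ ^ 2) :=
    ((hφc.comp (continuous_const.sub continuous_id)).norm.pow 2)
  have hψs : HasCompactSupport (fun z : E3 => ‖φ (x - z)‖ ^ 2) := by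
    have h1 : HasCompactSupport (fun y : E3 => ‖φ y‖ ^ 2) :=
      hsupp.comp_left (g := fun c : ℂ => ‖c‖ ^ 2) (by simp)
    exact h1.comp_homeomorph (Homeomorph.subLeft x)
  have hfint : Integrable (fun z : E3 => ‖φ (x - z)‖ ^ 2 / ‖z‖) :=
    integrable_div_norm hψc hψs
  have hgint : Integrable (fun y : E3 => ‖φ y‖ ^ 2 / ‖x - y‖) := by
    have := hfint.comp_sub_left x
    simpa only [sub_sub_cancel] using this
  -- a.e. rewrite of u
  have hxa : ∀ᵐ y : E3 ∂volume, x - y ≠ 0 := by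
    rw [ae_iff]
    have hset : {a : E3 | ¬ x - a ≠ 0} = {x} := by
      ext a
      simp [sub_eq_zero, eq_comm]
    rw [hset]
    exact measure_singleton x
  have hae : (fun y : E3 => u (x - y) * ‖φ y‖ ^ 2)
      =ᵐ[volume] fun y : E3 => lam * Real.exp (-mu * ‖x - y‖) / ‖x - y‖ * ‖φ y‖ ^ 2 := by
    filter_upwards [hxa] with y hy
    rw [hu _ hy]
  rw [show |∫ y : E3, u (x - y) * ‖φ y‖ ^ 2|
      = ‖∫ y : E3, u (x - y) * ‖φ y‖ ^ 2‖ from (Real.norm_eq_abs _).symm,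
    integral_congr_ae hae]
  have hbound : ‖∫ y : E3, lam * Real.exp (-mu * ‖x - y‖) / ‖x - y‖ * ‖φ y‖ ^ 2‖
      ≤ ∫ y : E3, |lam| * (‖φ y‖ ^ 2 / ‖x - y‖) := by
    refine norm_integral_le_of_norm_le (hgint.const_mul |lam|)
      (Filter.Eventually.of_forall fun y => ?_)
    have h1 : ‖lam * Real.exp (-mu * ‖x - y‖) / ‖x - y‖ * ‖φ y‖ ^ 2‖
        = |lam| * Real.exp (-mu * ‖x - y‖) * ‖φ y‖ ^ 2 / ‖x - y‖ := by
      rw [Real.norm_eq_abs, abs_mul, abs_div, abs_mul, abs_norm,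
        abs_of_nonneg (Real.exp_nonneg _),
        abs_of_nonneg (by positivity : (0:ℝ) ≤ ‖φ y‖ ^ 2)]
      ring
    rw [h1]
    calc |lam| * Real.exp (-mu * ‖x - y‖) * ‖φ y‖ ^ 2 / ‖x - y‖
        ≤ |lam| * 1 * ‖φ y‖ ^ 2 / ‖x - y‖ := by
          gcongr
          refine Real.exp_le_one_iff.2 ?_
          nlinarith [norm_nonneg (x - y)]
      _ = |lam| * (‖φ y‖ ^ 2 / ‖x - y‖) := by ring
  refine le_trans hbound ?_
  have hch : (∫ y : E3, |lam| * (‖φ y‖ ^ 2 / ‖x - y‖))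
      = |lam| * ∫ z : E3, ‖φ (x - z)‖ ^ 2 / ‖z‖ := by
    rw [integral_const_mul]
    congr 1
    rw [← integral_sub_left_eq_self (fun z : E3 => ‖φ (x - z)‖ ^ 2 / ‖z‖) volume x]
    congr 1
    funext y
    rw [sub_sub_cancel]
  rw [hch]
  calc |lam| * ∫ z : E3, ‖φ (x - z)‖ ^ 2 / ‖z‖
      ≤ |lam| * (2 * ∫ y : E3, ‖φ y‖ * ‖fderiv ℝ φ y‖) := by
        gcongr
        exact core_bound φ hφ hsupp x
    _ ≤ |lam| * (2 * (Real.sqrt (∫ y : E3, ‖φ y‖ ^ 2)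
          * Real.sqrt (∫ y : E3, ‖fderiv ℝ φ y‖ ^ 2))) := by
        gcongr
        exact cauchy_schwarz_step φ hφ hsupp
    _ = 2 * |lam| * Real.sqrt (∫ y : E3, ‖φ y‖ ^ 2)
          * Real.sqrt (∫ y : E3, ‖fderiv ℝ φ y‖ ^ 2) := by ring
end

section
/- Let n ≥ 1 and let B, C be n×n complex Hermitian matrices such that B is positive semidefinite, C is positive semidefinite, and C has rank at most 1. Set A := B − C (which is Hermitian). Then the sum of the absolute values of the eigenvalues of A satisfies ∑_{i} |λ_i(A)| ≤ trace(A) + 2 ( ∑_{i,j} |A_{ij}|² )^{1/2}, i.e. the trace norm of A is at most its trace plus twice its Frobenius (Hilbert–Schmidt) norm. In particular, if trace(B) = trace(C) then ∑_{i} |λ_i(A)| ≤ 2 ( ∑_{i,j} |A_{ij}|² )^{1/2}. -/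
open Matrix
open scoped ComplexOrder

/-!
Write `A = B - C`. On the kernel of `C` the quadratic form of `A` agrees with that of `B`, hence
is nonnegative; since two orthonormal eigenvectors of `A` always have a nonzero combination in
`ker C` (as `rank C ≤ 1`), `A` has at most one negative eigenvalue `λ`. Then
`∑ |λᵢ| = trace A + 2 |λ|`, and `|λ|` is bounded by `(∑ λᵢ²)^{1/2}`, the Frobenius norm of `A`.
-/

theorem sum_abs_le_sum_add_two_mul_sqrt_sum_sq {ι : Type*} [Fintype ι] (f : ι → ℝ)
    (hf : ∀ i j, f i < 0 → f j < 0 → i = j) :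
    ∑ i, |f i| ≤ ∑ i, f i + 2 * √(∑ i, f i ^ 2) := by
  have habs_le (i : ι) : |f i| ≤ √(∑ j, f j ^ 2) :=
    Real.abs_le_sqrt (Finset.single_le_sum (f := fun j => f j ^ 2)
      (fun j _ => sq_nonneg (f j)) (Finset.mem_univ i))
  rw [← sub_le_iff_le_add', ← Finset.sum_sub_distrib]
  by_cases hneg : ∃ i, f i < 0
  · obtain ⟨i₀, hi₀⟩ := hneg
    rw [Finset.sum_eq_single i₀ (fun i _ hi => by
        rw [abs_of_nonneg (not_lt.mp fun h => hi (hf i i₀ h hi₀)), sub_self])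
      (fun h => absurd (Finset.mem_univ i₀) h)]
    linarith [abs_of_neg hi₀, habs_le i₀]
  · push Not at hneg
    simp only [abs_of_nonneg (hneg _), sub_self, Finset.sum_const_zero]
    positivity

theorem OrthonormalBasis.star_dotProduct_eq_ite {n 𝕜 : Type*} [Fintype n] [DecidableEq n]
    [RCLike 𝕜] (b : OrthonormalBasis n 𝕜 (EuclideanSpace 𝕜 n)) (i j : n) :
    star ⇑(b i) ⬝ᵥ ⇑(b j) = if i = j then 1 else 0 := by
  rw [dotProduct_comm, ← EuclideanSpace.inner_eq_star_dotProduct, b.inner_eq_ite]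

namespace Matrix

theorem exists_mulVec_smul_add_smul_eq_zero {m n K : Type*} [Fintype n] [Field K]
    {C : Matrix m n K} (hC : C.rank ≤ 1) (v w : n → K) :
    ∃ s t : K, (s ≠ 0 ∨ t ≠ 0) ∧ C *ᵥ (s • v + t • w) = 0 := by
  have hdep : ¬ LinearIndependent K ![C *ᵥ v, C *ᵥ w] := by
    intro hli
    have hspan :
        Submodule.span K (Set.range ![C *ᵥ v, C *ᵥ w]) ≤ LinearMap.range C.mulVecLin := by
      rw [Submodule.span_le, Set.range_subset_iff]
      intro k
      fin_cases k
      exacts [⟨v, rfl⟩, ⟨w, rfl⟩]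
    have hcard := Submodule.finrank_mono hspan
    rw [finrank_span_eq_card hli, Fintype.card_fin] at hcard
    exact absurd (hcard.trans hC) (by norm_num)
  rw [LinearIndependent.pair_iff] at hdep
  push Not at hdep
  obtain ⟨s, t, hst, hne⟩ := hdep
  refine ⟨s, t, not_and_or.mp fun h => hne h.1 h.2, ?_⟩
  rwa [mulVec_add, mulVec_smul, mulVec_smul]

variable {n 𝕜 : Type*} [Fintype n] [DecidableEq n] [RCLike 𝕜]

theorem trace_conjStarAlgAut (U : unitaryGroup n 𝕜) (M : Matrix n n 𝕜) :
    (Unitary.conjStarAlgAut 𝕜 _ U M).trace = M.trace := by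
  rw [Unitary.conjStarAlgAut_apply, trace_mul_cycle, Unitary.coe_star_mul_self, one_mul]

omit [DecidableEq n] in
theorem trace_conjTranspose_mul_self (A : Matrix n n 𝕜) :
    (Aᴴ * A).trace = ((∑ i, ∑ j, ‖A i j‖ ^ 2 : ℝ) : 𝕜) := by
  rw [Finset.sum_comm]
  push_cast
  simp only [trace, diag, mul_apply, conjTranspose_apply, RCLike.star_def, RCLike.conj_mul]

namespace IsHermitian

variable {A : Matrix n n 𝕜} (hA : A.IsHermitian)
include hA

theorem re_trace_eq_sum_eigenvalues : RCLike.re A.trace = ∑ i, hA.eigenvalues i := by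
  simp [hA.trace_eq_sum_eigenvalues]

theorem sum_sq_eigenvalues : ∑ i, hA.eigenvalues i ^ 2 = ∑ i, ∑ j, ‖A i j‖ ^ 2 := by
  have htrace : (Aᴴ * A).trace = ∑ i, ((hA.eigenvalues i ^ 2 : ℝ) : 𝕜) := by
    conv_lhs => rw [hA.eq, hA.spectral_theorem, ← map_mul, trace_conjStarAlgAut,
      diagonal_mul_diagonal, trace_diagonal]
    simp [sq]
  rw [trace_conjTranspose_mul_self, ← RCLike.ofReal_sum] at htrace
  exact (RCLike.ofReal_inj.mp htrace).symm

theorem star_dotProduct_mulVec_eigenvectorBasis_add {i j : n} (hij : i ≠ j) (s t : 𝕜) :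
    star (s • ⇑(hA.eigenvectorBasis i) + t • ⇑(hA.eigenvectorBasis j)) ⬝ᵥ
        (A *ᵥ (s • ⇑(hA.eigenvectorBasis i) + t • ⇑(hA.eigenvectorBasis j))) =
      ((‖s‖ ^ 2 * hA.eigenvalues i + ‖t‖ ^ 2 * hA.eigenvalues j : ℝ) : 𝕜) := by
  simp only [mulVec_add, mulVec_smul, hA.mulVec_eigenvectorBasis, star_add, star_smul,
    add_dotProduct, dotProduct_add, smul_dotProduct, dotProduct_smul,
    hA.eigenvectorBasis.star_dotProduct_eq_ite, if_neg hij, if_neg hij.symm,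
    RCLike.real_smul_eq_coe_smul (K := 𝕜), smul_eq_mul]
  push_cast
  rw [← RCLike.conj_mul, ← RCLike.conj_mul]
  simp only [RCLike.star_def]
  ring

theorem eq_of_eigenvalues_neg {C : Matrix n n 𝕜} (hAC : (A + C).PosSemidef) (hC : C.rank ≤ 1)
    {i j : n} (hi : hA.eigenvalues i < 0) (hj : hA.eigenvalues j < 0) : i = j := by
  by_contra hij
  obtain ⟨s, t, hst, hker⟩ := exists_mulVec_smul_add_smul_eq_zero hC
    (hA.eigenvectorBasis i) (hA.eigenvectorBasis j)
  have hform := hAC.dotProduct_mulVec_nonneg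
    (s • ⇑(hA.eigenvectorBasis i) + t • ⇑(hA.eigenvectorBasis j))
  rw [add_mulVec, hker, add_zero, hA.star_dotProduct_mulVec_eigenvectorBasis_add hij,
    RCLike.ofReal_nonneg] at hform
  have hs_term := mul_nonpos_of_nonneg_of_nonpos (sq_nonneg ‖s‖) hi.le
  have ht_term := mul_nonpos_of_nonneg_of_nonpos (sq_nonneg ‖t‖) hj.le
  rcases hst with hs | ht
  · linarith [mul_neg_of_pos_of_neg (pow_pos (norm_pos_iff.mpr hs) 2) hi]
  · linarith [mul_neg_of_pos_of_neg (pow_pos (norm_pos_iff.mpr ht) 2) hj]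

end IsHermitian

end Matrix

theorem traceNorm_le_trace_add_two_frobenius_general
    (n : ℕ) (B C : Matrix (Fin n) (Fin n) ℂ)
    (hB : B.PosSemidef) (hrank : C.rank ≤ 1)
    (hA : (B - C).IsHermitian) :
    (∑ i, |hA.eigenvalues i|
        ≤ ((B - C).trace).re
          + 2 * Real.sqrt (∑ i, ∑ j, ‖(B - C) i j‖ ^ 2)) ∧
      (B.trace = C.trace →
        ∑ i, |hA.eigenvalues i| ≤ 2 * Real.sqrt (∑ i, ∑ j, ‖(B - C) i j‖ ^ 2)) := by
  have hmain : ∑ i, |hA.eigenvalues i|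
      ≤ ((B - C).trace).re + 2 * Real.sqrt (∑ i, ∑ j, ‖(B - C) i j‖ ^ 2) := by
    rw [← RCLike.re_eq_complex_re, hA.re_trace_eq_sum_eigenvalues, ← hA.sum_sq_eigenvalues]
    exact sum_abs_le_sum_add_two_mul_sqrt_sum_sq _ fun _ _ =>
      hA.eq_of_eigenvalues_neg (C := C) (by rwa [sub_add_cancel]) hrank
  refine ⟨hmain, fun htrace => ?_⟩
  simpa [trace_sub, htrace] using hmain

/-- If `A = B - C` with `B, C` Hermitian positive semidefinite and `C` of rank at most
one, then the trace norm of `A` is at most its trace plus twice its Frobenius norm; in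
particular, if `trace B = trace C` the trace norm is bounded by twice the Frobenius
norm. -/
theorem traceNorm_le_trace_add_two_frobenius
    (n : ℕ) (hn : 1 ≤ n) (B C : Matrix (Fin n) (Fin n) ℂ)
    (hB : B.PosSemidef) (hC : C.PosSemidef) (hrank : C.rank ≤ 1)
    (hA : (B - C).IsHermitian) :
    (∑ i, |hA.eigenvalues i|
        ≤ ((B - C).trace).re
          + 2 * Real.sqrt (∑ i, ∑ j, ‖(B - C) i j‖ ^ 2)) ∧
      (B.trace = C.trace →
        ∑ i, |hA.eigenvalues i| ≤ 2 * Real.sqrt (∑ i, ∑ j, ‖(B - C) i j‖ ^ 2)) :=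
  traceNorm_le_trace_add_two_frobenius_general n B C hB hrank hA
end

section
/- Let m, q be nonempty finite types and let ρ be a Hermitian complex matrix indexed by (m × q) × (m × q). Define its partial trace over the second factor as the m × m matrix σ with entries σ(i, j) := ∑_{k ∈ q} ρ((i, k), (j, k)); then σ is Hermitian and the sum of the absolute values of the eigenvalues of σ is at most the sum of the absolute values of the eigenvalues of ρ: ∑_i |λ_i(σ)| ≤ ∑_i |λ_i(ρ)|. (This is the finite-dimensional form of the statement that the trace norm of a partial trace of a trace class operator is bounded by the trace norm of the operator.) -/
/-!
Let `wᵢ` be an orthonormal eigenbasis of the partial trace `σ`. Then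
`λᵢ(σ) = ∑ₖ ⟪wᵢ ⊗ eₖ, ρ (wᵢ ⊗ eₖ)⟫`, and the vectors `wᵢ ⊗ eₖ` form an orthonormal family.
For any family `xₜ` satisfying Bessel's inequality, expanding in an eigenbasis `vⱼ` of `ρ` gives
`∑ₜ |⟪xₜ, ρ xₜ⟫| ≤ ∑ⱼ |λⱼ(ρ)| ∑ₜ |⟪vⱼ, xₜ⟫|² ≤ ∑ⱼ |λⱼ(ρ)|`.
-/

open Matrix

open scoped InnerProductSpace

namespace Matrix.IsHermitian

variable {𝕜 n : Type*} [RCLike 𝕜] [Fintype n] [DecidableEq n] {A : Matrix n n 𝕜}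

lemma toEuclideanLin_eigenvectorBasis (hA : A.IsHermitian) (j : n) :
    toEuclideanLin A (hA.eigenvectorBasis j) = (hA.eigenvalues j : 𝕜) • hA.eigenvectorBasis j := by
  rw [toLpLin_apply, hA.mulVec_eigenvectorBasis, RCLike.real_smul_eq_coe_smul (K := 𝕜)]
  rfl

lemma eigenvalues_eq_re_inner (hA : A.IsHermitian) (j : n) :
    hA.eigenvalues j =
      RCLike.re ⟪hA.eigenvectorBasis j, toEuclideanLin A (hA.eigenvectorBasis j)⟫_𝕜 := by
  rw [toEuclideanLin_eigenvectorBasis, inner_smul_right, inner_self_eq_norm_sq_to_K,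
    hA.eigenvectorBasis.norm_eq_one]
  simp

lemma re_inner_toEuclideanLin_self (hA : A.IsHermitian) (x : EuclideanSpace 𝕜 n) :
    RCLike.re ⟪x, toEuclideanLin A x⟫_𝕜 =
      ∑ j, hA.eigenvalues j * ‖⟪hA.eigenvectorBasis j, x⟫_𝕜‖ ^ 2 := by
  have hAx : toEuclideanLin A x =
      ∑ j, ⟪hA.eigenvectorBasis j, x⟫_𝕜 • (hA.eigenvalues j : 𝕜) • hA.eigenvectorBasis j := by
    conv_lhs => rw [← hA.eigenvectorBasis.sum_repr' x]
    simp only [map_sum, map_smul, toEuclideanLin_eigenvectorBasis]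
  rw [hAx, inner_sum, map_sum]
  refine Fintype.sum_congr _ _ fun j => ?_
  rw [inner_smul_right, inner_smul_right, ← inner_conj_symm x, mul_left_comm, RCLike.mul_conj]
  norm_cast

lemma abs_re_inner_toEuclideanLin_self_le (hA : A.IsHermitian) (x : EuclideanSpace 𝕜 n) :
    |RCLike.re ⟪x, toEuclideanLin A x⟫_𝕜| ≤
      ∑ j, |hA.eigenvalues j| * ‖⟪hA.eigenvectorBasis j, x⟫_𝕜‖ ^ 2 := by
  rw [hA.re_inner_toEuclideanLin_self]
  refine (Finset.abs_sum_le_sum_abs _ _).trans_eq (Fintype.sum_congr _ _ fun j => ?_)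
  rw [abs_mul, abs_pow, abs_norm]

lemma sum_abs_re_inner_toEuclideanLin_le {ι : Type*} [Fintype ι] (hA : A.IsHermitian)
    (x : ι → EuclideanSpace 𝕜 n) (hx : ∀ u, ∑ t, ‖⟪x t, u⟫_𝕜‖ ^ 2 ≤ ‖u‖ ^ 2) :
    ∑ t, |RCLike.re ⟪x t, toEuclideanLin A (x t)⟫_𝕜| ≤ ∑ j, |hA.eigenvalues j| := by
  calc ∑ t, |RCLike.re ⟪x t, toEuclideanLin A (x t)⟫_𝕜|
      ≤ ∑ t, ∑ j, |hA.eigenvalues j| * ‖⟪hA.eigenvectorBasis j, x t⟫_𝕜‖ ^ 2 :=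
        Finset.sum_le_sum fun t _ => hA.abs_re_inner_toEuclideanLin_self_le (x t)
    _ = ∑ j, |hA.eigenvalues j| * ∑ t, ‖⟪x t, hA.eigenvectorBasis j⟫_𝕜‖ ^ 2 := by
        simp only [Finset.sum_comm (γ := ι), Finset.mul_sum, norm_inner_symm]
    _ ≤ ∑ j, |hA.eigenvalues j| := by
        refine Finset.sum_le_sum fun j _ => mul_le_of_le_one_right (abs_nonneg _) ?_
        simpa using hx (hA.eigenvectorBasis j)

end Matrix.IsHermitian

namespace EuclideanSpace

variable {𝕜 m q : Type*} [RCLike 𝕜] [Fintype m] [Fintype q] [DecidableEq q]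

/-- The vector `w ⊗ eₖ`. -/
def tensorSingle (w : EuclideanSpace 𝕜 m) (k : q) : EuclideanSpace 𝕜 (m × q) :=
  WithLp.toLp 2 fun p => if p.2 = k then w p.1 else 0

lemma inner_tensorSingle_left (w : EuclideanSpace 𝕜 m) (k : q) (u : EuclideanSpace 𝕜 (m × q)) :
    ⟪tensorSingle w k, u⟫_𝕜 = ⟪w, WithLp.toLp 2 fun i => u (i, k)⟫_𝕜 := by
  simp [tensorSingle, PiLp.inner_apply, Fintype.sum_prod_type, apply_ite]

lemma sum_sum_norm_inner_tensorSingle_sq (b : OrthonormalBasis m 𝕜 (EuclideanSpace 𝕜 m))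
    (u : EuclideanSpace 𝕜 (m × q)) :
    ∑ i, ∑ k, ‖⟪tensorSingle (b i) k, u⟫_𝕜‖ ^ 2 = ‖u‖ ^ 2 := by
  simp only [inner_tensorSingle_left]
  rw [Finset.sum_comm]
  simp only [b.sum_sq_norm_inner_right, EuclideanSpace.norm_sq_eq, Fintype.sum_prod_type]
  exact Finset.sum_comm

end EuclideanSpace

namespace Matrix

variable {m q R : Type*} [Fintype q]

def partialTrace [AddCommMonoid R] (ρ : Matrix (m × q) (m × q) R) : Matrix m m R :=
  of fun i j => ∑ k, ρ (i, k) (j, k)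

lemma IsHermitian.partialTrace [AddCommMonoid R] [StarAddMonoid R]
    {ρ : Matrix (m × q) (m × q) R} (hρ : ρ.IsHermitian) : ρ.partialTrace.IsHermitian := by
  ext i j
  simp only [Matrix.partialTrace, conjTranspose_apply, of_apply, star_sum]
  exact Fintype.sum_congr _ _ fun k => hρ.apply (i, k) (j, k)

open EuclideanSpace in
lemma inner_toEuclideanLin_partialTrace {𝕜 : Type*} [RCLike 𝕜] [Fintype m] [DecidableEq m]
    [DecidableEq q] (ρ : Matrix (m × q) (m × q) 𝕜) (w : EuclideanSpace 𝕜 m) :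
    ⟪w, toEuclideanLin ρ.partialTrace w⟫_𝕜 =
      ∑ k, ⟪tensorSingle w k, toEuclideanLin ρ (tensorSingle w k)⟫_𝕜 := by
  simp only [inner_eq_star_dotProduct, toLpLin_apply, tensorSingle, dotProduct, mulVec,
    partialTrace, of_apply, Finset.sum_mul, Pi.star_apply, RCLike.star_def, apply_ite, map_zero,
    mul_zero, Fintype.sum_prod_type, Finset.sum_ite_eq', Finset.mem_univ, if_true]
  rw [Finset.sum_comm (s := Finset.univ (α := q))]
  exact Fintype.sum_congr _ _ fun i => Finset.sum_comm

end Matrix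

theorem traceNorm_partialTrace_le_general
    (m q : Type*) [Fintype m] [Fintype q] [DecidableEq m] [DecidableEq q]
    (ρ : Matrix (m × q) (m × q) ℂ) (hρ : ρ.IsHermitian) :
    ∃ hσ : (Matrix.of fun i j : m => ∑ k : q, ρ (i, k) (j, k)).IsHermitian,
      ∑ i, |hσ.eigenvalues i| ≤ ∑ i, |hρ.eigenvalues i| := by
  refine ⟨hρ.partialTrace, ?_⟩
  set hσ := hρ.partialTrace
  let x : m × q → EuclideanSpace ℂ (m × q) := fun p =>
    EuclideanSpace.tensorSingle (hσ.eigenvectorBasis p.1) p.2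
  calc ∑ i, |hσ.eigenvalues i|
      = ∑ i, |∑ k, RCLike.re ⟪x (i, k), toEuclideanLin ρ (x (i, k))⟫_ℂ| := by
        simp only [hσ.eigenvalues_eq_re_inner, inner_toEuclideanLin_partialTrace, map_sum, x]
    _ ≤ ∑ p, |RCLike.re ⟪x p, toEuclideanLin ρ (x p)⟫_ℂ| := by
        rw [Fintype.sum_prod_type]
        exact Finset.sum_le_sum fun i _ => Finset.abs_sum_le_sum_abs _ _
    _ ≤ ∑ j, |hρ.eigenvalues j| := hρ.sum_abs_re_inner_toEuclideanLin_le x fun u => by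
        rw [Fintype.sum_prod_type, EuclideanSpace.sum_sum_norm_inner_tensorSingle_sq]

/-- The trace norm of the partial trace of a Hermitian matrix on a finite-dimensional
tensor product is bounded by the trace norm of the matrix. -/
theorem traceNorm_partialTrace_le
    (m q : Type*) [Fintype m] [Fintype q] [DecidableEq m] [DecidableEq q]
    [Nonempty m] [Nonempty q]
    (ρ : Matrix (m × q) (m × q) ℂ) (hρ : ρ.IsHermitian) :
    ∃ hσ : (Matrix.of fun i j : m => ∑ k : q, ρ (i, k) (j, k)).IsHermitian,
      ∑ i, |hσ.eigenvalues i| ≤ ∑ i, |hρ.eigenvalues i| :=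
  traceNorm_partialTrace_le_general m q ρ hρ
end
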